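/- Let O be a 2S×2S real orthogonal matrix, let 1 ≤ i ≤ S, and let j₁,...,j_{S−1} be any S−1 row indices in {1,...,2S}. Then there exists a 2S×2S real orthogonal symplectic matrix W such that the entries of columns 2i−1 and 2i of OW vanish in all of the rows j₁,...,j_{S−1}; that is, (OW)_{j_m,2i−1} = 0 and (OW)_{j_m,2i} = 0 for all m = 1,...,S−1. -/

import Mathlib

/-! Realify a complex `S × S` matrix by letting mode `a` carry the real and imaginary parts of
the `a`-th complex coordinate. Realification turns conjugate transposition into transposition
and sends `-i` to `Ω`; since `-i` is central, realifications of unitary matrices are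
orthogonal symplectic. Reading row `j m` of `O` as a vector `z m ∈ ℂ^S`, the mode-`i` entries
of row `j m` of `O W` are the real and imaginary parts of `⟪U eᵢ, z m⟫`. There are only
`S - 1` vectors `z m`, so some unit vector `v` is orthogonal to all of them, and a unitary `U`
with `i`-th column `v` does the job. -/

open Matrix

/-- The standard symplectic form `Ω` on `2S` phase-space coordinates ordered
`(q₁,p₁,…,q_S,p_S)`: the direct sum of `S` copies of `[[0,1],[-1,0]]`. -/
def Omega (S : ℕ) : Matrix (Fin (2 * S)) (Fin (2 * S)) ℝ :=
  Matrix.of fun i j =>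
    if i.val + 1 = j.val ∧ i.val % 2 = 0 then (1 : ℝ)
    else if j.val + 1 = i.val ∧ j.val % 2 = 0 then -1 else 0

/-- A `2S × 2S` real matrix is orthogonal symplectic if `WᵀW = 1` and `WᵀΩW = Ω`. -/
def IsOrthoSymp (S : ℕ) (W : Matrix (Fin (2 * S)) (Fin (2 * S)) ℝ) : Prop :=
  Wᵀ * W = 1 ∧ Wᵀ * Omega S * W = Omega S

open Module
open scoped InnerProductSpace

theorem exists_norm_eq_one_forall_inner_eq_zero {𝕜 E ι : Type*} [RCLike 𝕜]
    [NormedAddCommGroup E] [InnerProductSpace 𝕜 E] [FiniteDimensional 𝕜 E] [Fintype ι]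
    (z : ι → E) (hz : Fintype.card ι < finrank 𝕜 E) :
    ∃ v : E, ‖v‖ = 1 ∧ ∀ m, ⟪v, z m⟫_𝕜 = 0 := by
  have hspan : Submodule.span 𝕜 (Set.range z) ≠ ⊤ := fun h => by
    have := finrank_range_le_card (R := 𝕜) z
    rw [Set.finrank, h, finrank_top] at this
    omega
  obtain ⟨u, hu, hu0⟩ := Submodule.exists_mem_ne_zero_of_ne_bot
    (mt Submodule.orthogonal_eq_bot_iff.mp hspan)
  refine ⟨(‖u‖⁻¹ : 𝕜) • u, norm_smul_inv_norm hu0, fun m => ?_⟩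
  rw [inner_smul_left,
    Submodule.inner_left_of_mem_orthogonal (Submodule.subset_span (Set.mem_range_self m)) hu,
    mul_zero]

theorem exists_mem_unitaryGroup_col_eq {𝕜 ι : Type*} [RCLike 𝕜] [Fintype ι] [DecidableEq ι]
    {v : EuclideanSpace 𝕜 ι} (hv : ‖v‖ = 1) (i : ι) :
    ∃ U ∈ unitaryGroup ι 𝕜, ∀ a, U a i = v a := by
  have hON : Orthonormal 𝕜 (({i} : Set ι).domRestrict fun _ => v) :=
    orthonormal_subsingleton_iff.mpr fun _ => hv
  obtain ⟨b, hb⟩ := hON.exists_orthonormalBasis_extension_of_card_eq finrank_euclideanSpace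
  refine ⟨(EuclideanSpace.basisFun ι 𝕜).toBasis.toMatrix b,
    (EuclideanSpace.basisFun ι 𝕜).toMatrix_orthonormalBasis_mem_unitary b, fun a => ?_⟩
  simp [Basis.toMatrix_apply, hb i rfl]

def modeEquiv (S : ℕ) : Fin S × Fin 2 ≃ Fin (2 * S) :=
  finProdFinEquiv.trans (finCongr (Nat.mul_comm S 2))

@[simp]
theorem modeEquiv_apply_val {S : ℕ} (p : Fin S × Fin 2) :
    (modeEquiv S p : ℕ) = 2 * p.1 + p.2 := by
  simp [modeEquiv, mul_comm, add_comm]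

/-- Mode block `(a, b)` is `[[re z, -im z], [im z, re z]]` for `z = U a b`: the real matrix of
multiplication by `z`. -/
noncomputable def realify (S : ℕ) :
    Matrix (Fin S) (Fin S) ℂ →ₐ[ℝ] Matrix (Fin (2 * S)) (Fin (2 * S)) ℝ :=
  ((reindexAlgEquiv ℝ ℝ (modeEquiv S)).toAlgHom.comp
    (compAlgEquiv (Fin S) (Fin 2) ℝ ℝ).toAlgHom).comp
    (Algebra.leftMulMatrix Complex.basisOneI).mapMatrix

theorem realify_apply_modeEquiv {S : ℕ} (U : Matrix (Fin S) (Fin S) ℂ) (p q : Fin S × Fin 2) :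
    realify S U (modeEquiv S p) (modeEquiv S q) =
      Algebra.leftMulMatrix Complex.basisOneI (U p.1 q.1) p.2 q.2 := by
  simp [realify]

noncomputable def realifyVec (S : ℕ) (w : Fin S → ℂ) : Fin (2 * S) → ℝ :=
  (fun p : Fin S × Fin 2 => Complex.basisOneI.repr (w p.1) p.2) ∘ (modeEquiv S).symm

theorem realifyVec_apply_modeEquiv {S : ℕ} (w : Fin S → ℂ) (p : Fin S × Fin 2) :
    realifyVec S w (modeEquiv S p) = Complex.basisOneI.repr (w p.1) p.2 := by
  simp [realifyVec]

theorem realifyVec_surjective (S : ℕ) : Function.Surjective (realifyVec S) := by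
  intro x
  refine ⟨fun a => Complex.basisOneI.equivFun.symm fun t => x (modeEquiv S (a, t)), ?_⟩
  funext r
  obtain ⟨⟨a, t⟩, rfl⟩ := (modeEquiv S).surjective r
  rw [realifyVec_apply_modeEquiv, ← Basis.equivFun_apply, LinearEquiv.apply_symm_apply]

theorem realify_mulVec_realifyVec {S : ℕ} (U : Matrix (Fin S) (Fin S) ℂ) (w : Fin S → ℂ) :
    realify S U *ᵥ realifyVec S w = realifyVec S (U *ᵥ w) := by
  funext r
  obtain ⟨⟨a, s⟩, rfl⟩ := (modeEquiv S).surjective r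
  simp only [mulVec, dotProduct, ← (modeEquiv S).sum_comp, Fintype.sum_prod_type,
    realify_apply_modeEquiv, realifyVec_apply_modeEquiv, map_sum, Finsupp.coe_finsetSum,
    Finset.sum_apply, ← Algebra.leftMulMatrix_mulVec_repr]

theorem leftMulMatrix_basisOneI_star (z : ℂ) :
    Algebra.leftMulMatrix Complex.basisOneI (star z) =
      (Algebra.leftMulMatrix Complex.basisOneI z)ᵀ := by
  ext s t
  fin_cases s <;> fin_cases t <;> simp [Algebra.leftMulMatrix_complex]

theorem realify_conjTranspose {S : ℕ} (U : Matrix (Fin S) (Fin S) ℂ) :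
    realify S Uᴴ = (realify S U)ᵀ := by
  ext r c
  obtain ⟨p, rfl⟩ := (modeEquiv S).surjective r
  obtain ⟨q, rfl⟩ := (modeEquiv S).surjective c
  rw [transpose_apply, realify_apply_modeEquiv, realify_apply_modeEquiv, conjTranspose_apply,
    leftMulMatrix_basisOneI_star, transpose_apply]

theorem Omega_apply_modeEquiv {S : ℕ} (p q : Fin S × Fin 2) :
    Omega S (modeEquiv S p) (modeEquiv S q) =
      if p.1 = q.1 then !![0, 1; -1, 0] p.2 q.2 else 0 := by
  obtain ⟨⟨a, ha⟩, s⟩ := p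
  obtain ⟨⟨b, hb⟩, t⟩ := q
  fin_cases s <;> fin_cases t <;> simp [Omega] <;> grind

theorem Omega_eq_realify (S : ℕ) : Omega S = realify S ((-Complex.I) • 1) := by
  ext r c
  obtain ⟨p, rfl⟩ := (modeEquiv S).surjective r
  obtain ⟨q, rfl⟩ := (modeEquiv S).surjective c
  rw [Omega_apply_modeEquiv, realify_apply_modeEquiv, Matrix.smul_apply, one_apply]
  split_ifs
  · simp [Algebra.leftMulMatrix_complex]
  · simp

theorem isOrthoSymp_realify {S : ℕ} {U : Matrix (Fin S) (Fin S) ℂ}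
    (hU : U ∈ unitaryGroup (Fin S) ℂ) : IsOrthoSymp S (realify S U) := by
  have hUU : Uᴴ * U = 1 := mem_unitaryGroup_iff'.mp hU
  constructor
  · rw [← realify_conjTranspose, ← map_mul, hUU, map_one]
  · rw [Omega_eq_realify, ← realify_conjTranspose, ← map_mul, ← map_mul, Matrix.mul_smul,
      Matrix.mul_one, Matrix.smul_mul, hUU]

/-- For any `2S × 2S` real orthogonal `O`, any mode `i`, and any
`S - 1` (distinct) row indices `j₁,…,j_{S-1}`, there is an orthogonal symplectic `W`
such that columns `2i-1` and `2i` of `O * W` vanish in all of those rows.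
(Indices are `0`-based: the mode-`i` columns are `2i` and `2i+1`.) -/
theorem exists_ortho_symp_cols_vanish_rows (S : ℕ)
    (O : Matrix (Fin (2 * S)) (Fin (2 * S)) ℝ)
    (i : Fin S) (j : Fin (S - 1) → Fin (2 * S)) :
    ∃ W : Matrix (Fin (2 * S)) (Fin (2 * S)) ℝ,
      IsOrthoSymp S W ∧
      ∀ m : Fin (S - 1),
        (O * W) (j m) ⟨2 * i.val, by have := i.isLt; omega⟩ = 0 ∧
        (O * W) (j m) ⟨2 * i.val + 1, by have := i.isLt; omega⟩ = 0 := by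
  choose z hz using fun m => realifyVec_surjective S (O (j m))
  obtain ⟨v, hv, hvz⟩ := exists_norm_eq_one_forall_inner_eq_zero (𝕜 := ℂ)
    (fun m => WithLp.toLp 2 (z m)) (by simpa using Nat.sub_one_lt i.pos.ne')
  obtain ⟨U, hU, hUi⟩ := exists_mem_unitaryGroup_col_eq hv i
  refine ⟨realify S U, isOrthoSymp_realify hU, fun m => ?_⟩
  have hrow : (O * realify S U) (j m) = realifyVec S (Uᴴ *ᵥ z m) := by
    rw [mul_apply_eq_vecMul, ← hz m, ← mulVec_transpose, ← realify_conjTranspose,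
      realify_mulVec_realifyVec]
  have hcol : (Uᴴ *ᵥ z m) i = 0 := by
    rw [← hvz m, EuclideanSpace.inner_eq_star_dotProduct]
    simp [mulVec, dotProduct, hUi, mul_comm]
  have hmode : ∀ t, (O * realify S U) (j m) (modeEquiv S (i, t)) = 0 := fun t => by
    rw [hrow, realifyVec_apply_modeEquiv, hcol, map_zero, Finsupp.zero_apply]
  exact ⟨by convert hmode 0 using 2; ext; simp, by convert hmode 1 using 2; ext; simp⟩
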